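/- arXiv:2211.12559 — 3 statements merged into one kernel-verified Lean document; each statement's English description precedes it below -/
import Mathlib

section
/- For t ≥ 14, the set {α + 2β : (α, β) ∈ ℕ², 3α + 5β + 2 = t} is an interval of consecutive integers (i.e., if m and M are its minimum and maximum, every integer in [m, M] is attained). -/
/-!
Any two solutions of `3α + 5β = s` differ by a multiple of `(-5, 3)`, and the move
`(α, β) ↦ (α - 5, β + 3)` raises `α + 2β` by exactly one. So from any attained value below the
maximum one can step up by one, and induction from the minimum reaches every value up to the
maximum.
-/

def solutionValues (t : ℕ) : Set ℕ :=
  {n | ∃ α β : ℕ, 3 * α + 5 * β + 2 = t ∧ n = α + 2 * β}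

lemma five_le_of_add_two_mul_lt {α β α' β' : ℕ} (h : 3 * α + 5 * β = 3 * α' + 5 * β')
    (hlt : α + 2 * β < α' + 2 * β') : 5 ≤ α := by
  omega

lemma add_one_mem_solutionValues {t k M : ℕ} (hk : k ∈ solutionValues t)
    (hM : M ∈ solutionValues t) (hkM : k < M) : k + 1 ∈ solutionValues t := by
  obtain ⟨α, β, rfl, rfl⟩ := hk
  obtain ⟨α', β', hsol, rfl⟩ := hM
  have hα : 5 ≤ α := five_le_of_add_two_mul_lt (by omega) hkM
  exact ⟨α - 5, β + 3, by omega, by omega⟩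

theorem values_form_interval_general (t : ℕ) (m M : ℕ)
    (hm : IsLeast {n : ℕ | ∃ α β : ℕ, 3 * α + 5 * β + 2 = t ∧ n = α + 2 * β} m)
    (hM : IsGreatest {n : ℕ | ∃ α β : ℕ, 3 * α + 5 * β + 2 = t ∧ n = α + 2 * β} M) :
    ∀ n : ℕ, m ≤ n → n ≤ M →
      n ∈ {n : ℕ | ∃ α β : ℕ, 3 * α + 5 * β + 2 = t ∧ n = α + 2 * β} := by
  intro n hmn hnM
  induction n, hmn using Nat.le_induction with
  | base => exact hm.1
  | succ k _ ih => exact add_one_mem_solutionValues (ih (by omega)) hM.1 (by omega)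

/-- For `t ≥ 14`, the set `{α + 2β : α, β ∈ ℕ, 3α + 5β + 2 = t}` is an interval of
consecutive integers: every integer between its minimum and its maximum is attained. -/
theorem values_form_interval (t : ℕ) (ht : 14 ≤ t) (m M : ℕ)
    (hm : IsLeast {n : ℕ | ∃ α β : ℕ, 3 * α + 5 * β + 2 = t ∧ n = α + 2 * β} m)
    (hM : IsGreatest {n : ℕ | ∃ α β : ℕ, 3 * α + 5 * β + 2 = t ∧ n = α + 2 * β} M) :
    ∀ n : ℕ, m ≤ n → n ≤ M →
      n ∈ {n : ℕ | ∃ α β : ℕ, 3 * α + 5 * β + 2 = t ∧ n = α + 2 * β} :=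
  values_form_interval_general t m M hm hM
end

section
/- Define D: ℕ → Finset ℕ by D(2) = {0}, D(3) = {1}, D(4) = {1}, D(5) = {1}, D(6) = {2}, and for t ≥ 7, D(t) = (D(t−3) + 1) ∪ (D(t−5) + 2) (elementwise shifts). Define f(t) as 5, 2, 4, 1, 3 according to t ≡ 0, 1, 2, 3, 4 (mod 5). Then for every t ≥ 2, D(t) equals the set of integers in the closed interval [⌊t/3⌋, (2t − f(t))/5]. -/
/-!
Since `2t − f(t)` is the largest multiple of `5` below `2t`, the claimed set is the window
`{d | 5d < 2t ∧ t < 3d + 3}`. Shifting the windows of `t − 3` by `1` and of `t − 5` by `2` gives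
the windows `5d < 2t − 1, t < 3d + 3` and `5d < 2t, t < 3d + 2`, whose union misses only a `d`
with `5d = 2t − 1` and `t = 3d + 2`; these force `5d = 6d + 3`, so the window reproduces itself.
-/

/-- The set of sphere dimensions for the matching complex of `P_{3,t}`:
`D 2 = {0}`, `D 3 = D 4 = D 5 = {1}`, `D 6 = {2}`, and for `t ≥ 7`,
`D t = (D (t−3) + 1) ∪ (D (t−5) + 2)` (elementwise shifts). -/
def D : ℕ → Finset ℕ
  | 2 => {0}
  | 3 => {1}
  | 4 => {1}
  | 5 => {1}
  | 6 => {2}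
  | t + 7 => (D (t + 4)).image (· + 1) ∪ (D (t + 2)).image (· + 2)
  | _ => ∅

/-- `f t` is `5, 2, 4, 1, 3` according as `t ≡ 0, 1, 2, 3, 4 (mod 5)`. -/
def fmod (t : ℕ) : ℕ :=
  match t % 5 with
  | 0 => 5
  | 1 => 2
  | 2 => 4
  | 3 => 1
  | _ => 3

theorem Finset.mem_image_add_right_iff {s : Finset ℕ} {k d : ℕ} :
    d ∈ s.image (· + k) ↔ k ≤ d ∧ d - k ∈ s := by
  rw [Finset.mem_image]
  constructor
  · rintro ⟨r, hr, rfl⟩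
    simpa using hr
  · rintro ⟨hk, hd⟩
    exact ⟨d - k, hd, Nat.sub_add_cancel hk⟩

theorem five_mul_le_two_mul_sub_fmod_iff {t : ℕ} (ht : 1 ≤ t) (d : ℕ) :
    5 * d ≤ 2 * t - fmod t ↔ 5 * d < 2 * t := by
  have : t % 5 < 5 := Nat.mod_lt t (by norm_num)
  interval_cases h : t % 5 <;> simp only [fmod, h] <;> omega

theorem mem_D_iff : ∀ {t : ℕ}, 2 ≤ t → ∀ {d : ℕ}, d ∈ D t ↔ 5 * d < 2 * t ∧ t < 3 * d + 3
  | 2, _, _ | 3, _, _ | 4, _, _ | 5, _, _ | 6, _, _ => by simp only [D, Finset.mem_singleton]; omega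
  | t + 7, _, d => by
    have ih₃ := @mem_D_iff (t + 4) (by omega)
    have ih₅ := @mem_D_iff (t + 2) (by omega)
    simp only [D, Finset.mem_union, Finset.mem_image_add_right_iff, ih₃, ih₅]
    omega

/-- For every `t ≥ 2`, `D t` is exactly the set of integers `d` with
`⌊t/3⌋ ≤ d` and `5d ≤ 2t − f(t)`. -/
theorem D_eq_interval (t : ℕ) (ht : 2 ≤ t) :
    (D t : Set ℕ) = {d : ℕ | t / 3 ≤ d ∧ 5 * d ≤ 2 * t - fmod t} := by
  ext d
  rw [Finset.mem_coe, mem_D_iff ht, Set.mem_ofPred_eq, five_mul_le_two_mul_sub_fmod_iff (by omega)]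
  omega
end

section
/- With D defined by D(2)={0}, D(3)=D(4)=D(5)={1}, D(6)={2}, and D(t) = (D(t−3)+1) ∪ (D(t−5)+2) for t ≥ 7, the maximum of D(t) equals (2t − f(t))/5 for all t ≥ 2, where f(t) = 5, 2, 4, 1, 3 for t ≡ 0, 1, 2, 3, 4 (mod 5) respectively. -/
lemma fmod_spec (t : ℕ) : fmod t = if 2 * t % 5 = 0 then 5 else 2 * t % 5 := by
  have h : t % 5 = 0 ∨ t % 5 = 1 ∨ t % 5 = 2 ∨ t % 5 = 3 ∨ t % 5 = 4 := by omega
  rcases h with h | h | h | h | h <;>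
    have h2 : 2 * t % 5 = 2 * (t % 5) % 5 := by omega
  all_goals rw [h] at h2; simp [fmod, h, h2]

lemma max_image_add (s : Finset ℕ) {n : ℕ} (c : ℕ) (h : s.max = (n : ℕ)) :
    (s.image (· + c)).max = ((n + c : ℕ) : WithBot ℕ) := by
  have hs : s.Nonempty := by
    rcases s.eq_empty_or_nonempty with rfl | h'
    · simp at h
    · exact h'
  have hmax : ∀ hh : s.Nonempty, s.max' hh = n := by
    intro hh
    have := Finset.coe_max' hh
    rw [h] at this
    exact WithBot.coe_inj.mp this
  have h2 := Finset.max'_image (f := (· + c))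
    (fun a b hab => Nat.add_le_add_right hab c) s (hs.image _)
  rw [← Finset.coe_max' (hs.image _), h2, hmax]
  simp [Nat.cast_withBot]

lemma D_max_aux : ∀ t, 2 ≤ t → (D t).max = ((2 * t - fmod t) / 5 : ℕ)
  | 2, _ => by decide
  | 3, _ => by decide
  | 4, _ => by decide
  | 5, _ => by decide
  | 6, _ => by decide
  | (t + 7), _ => by
    have h4 := D_max_aux (t + 4) (by omega)
    have h2 := D_max_aux (t + 2) (by omega)
    show ((D (t + 4)).image (· + 1) ∪ (D (t + 2)).image (· + 2)).max = _
    rw [Finset.max_union, max_image_add _ 1 h4, max_image_add _ 2 h2]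
    have e : ((2 * (t + 4) - fmod (t + 4)) / 5 + 1 : ℕ) ⊔ ((2 * (t + 2) - fmod (t + 2)) / 5 + 2 : ℕ)
        = ((2 * (t + 7) - fmod (t + 7)) / 5 : ℕ) := by
      rw [fmod_spec, fmod_spec, fmod_spec]
      rcases Nat.le_total ((2 * (t + 4) - (if 2 * (t+4) % 5 = 0 then 5 else 2 * (t+4) % 5)) / 5 + 1)
        ((2 * (t + 2) - (if 2 * (t+2) % 5 = 0 then 5 else 2 * (t+2) % 5)) / 5 + 2) with h | h
      · rw [sup_eq_right.mpr h]; split_ifs at h ⊢ <;> omega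
      · rw [sup_eq_left.mpr h]; split_ifs at h ⊢ <;> omega
    simp only [Nat.cast_withBot]
    rw [← WithBot.coe_sup, e]

/-- For every `t ≥ 2`, the maximum of `D t` equals `(2t − f(t))/5`, where
`f(t) = 5, 2, 4, 1, 3` for `t ≡ 0, 1, 2, 3, 4 (mod 5)`. -/
theorem D_max (t : ℕ) (ht : 2 ≤ t) : (D t).max = ((2 * t - fmod t) / 5 : ℕ) :=
  D_max_aux t ht
end
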